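/- arXiv:2504.04416 — 4 statements merged into one kernel-verified Lean document; each statement's English description precedes it below -/
import Mathlib

section
/- Herbrand's Theorem (semantic form): Let L be a first-order language and let T be a universal L-theory, i.e., every sentence of T is the universal closure of a quantifier-free formula. Let φ(x,y) be a quantifier-free L-formula with free variables among {x,y}, and suppose that every model of T satisfies ∀x ∃y φ(x,y). Then there exist a natural number k ≥ 1 and L-terms t₁(x), …, t_k(x), each with free variables among {x}, such that every model of T satisfies ∀x (φ(x,t₁(x)) ∨ φ(x,t₂(x)) ∨ … ∨ φ(x,t_k(x))). -/
/-!
If `M ⊨ T` and `x : M`, the substructure of `M` generated by `x` is again a model of `T`, because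
`T` is universal. A witness `y` for `∃ y, φ(x, y)` found there is the value `t(x)` of a term, and
`φ(x, t(x))` holds in `M` as well, since `φ` is quantifier-free. Hence the theory
`T ∪ {¬ φ(c, t(c)) | t a term}` over `L` with a new constant `c` has no model, and by compactness
finitely many of the terms `t` already suffice.
-/

open FirstOrder FirstOrder.Language

universe u v w

namespace FirstOrder.Language

variable {L : Language.{u, v}}

theorem BoundedFormula.IsUniversal.alls {α : Type*} {n : ℕ} {χ : L.BoundedFormula α n}
    (h : χ.IsUniversal) : χ.alls.IsUniversal := by
  induction n with
  | zero => exact h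
  | succ n ih => exact ih h.all

theorem Theory.isUniversal_of_forall_eq_alls {T : L.Theory}
    (hT : ∀ σ ∈ T, ∃ (n : ℕ) (χ : L.BoundedFormula Empty n), χ.IsQF ∧ σ = χ.alls) :
    T.IsUniversal where
  isUniversal_of_mem σ hσ := by
    obtain ⟨n, χ, hχ, rfl⟩ := hT σ hσ
    exact hχ.isUniversal.alls

theorem Substructure.mem_closure_range_iff {α M : Type*} [L.Structure M] {v : α → M} {x : M} :
    x ∈ Substructure.closure L (Set.range v) ↔ ∃ t : L.Term α, t.realize v = x := by
  refine ⟨fun hx => ?_, ?_⟩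
  · obtain ⟨t, rfl⟩ := Substructure.mem_closure_iff_exists_term.1 hx
    refine ⟨t.relabel (Set.rangeSplitting v), ?_⟩
    rw [Term.realize_relabel]
    congr 1
    funext y
    exact Set.apply_rangeSplitting v y
  · rintro ⟨t, rfl⟩
    exact t.realize_mem _ fun a => Substructure.subset_closure (Set.mem_range_self a)

theorem Formula.realize_subst_sumElim_var {α β M : Type*} [L.Structure M]
    {φ : L.Formula (α ⊕ β)} {t : β → L.Term α} {v : α → M} :
    Formula.Realize (φ.subst (Sum.elim Term.var t)) v ↔
      φ.Realize (Sum.elim v fun b => (t b).realize v) := by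
  rw [Formula.Realize, BoundedFormula.realize_subst, Formula.Realize]
  congr! 2 with (a | b)

theorem Theory.IsUniversal.exists_terms_realize_subst {T : L.Theory} [T.IsUniversal]
    {α β : Type*} [Nonempty α] {φ : L.Formula (α ⊕ β)} (hφ : φ.IsQF)
    {M : Type w} [L.Structure M] [M ⊨ T]
    (h : ∀ (N : Type w) [L.Structure N] [Nonempty N], N ⊨ T →
      ∀ v : α → N, ∃ w : β → N, φ.Realize (Sum.elim v w))
    (v : α → M) : ∃ t : β → L.Term α, Formula.Realize (φ.subst (Sum.elim Term.var t)) v := by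
  set S := Substructure.closure L (Set.range v)
  let vS : α → S := fun a => ⟨v a, Substructure.subset_closure (Set.mem_range_self a)⟩
  have : Nonempty S := ⟨vS (Classical.arbitrary α)⟩
  obtain ⟨w, hw⟩ := h S (Theory.IsUniversal.models_of_embedding S.subtype) vS
  choose t ht using fun b => Substructure.mem_closure_range_iff.1 (w b).2
  refine ⟨t, Formula.realize_subst_sumElim_var.2 ?_⟩
  have hwM := (hφ.realize_embedding S.subtype (v := Sum.elim vS w) (xs := default)).2 hw
  rw [Sum.comp_elim] at hwM
  rw [Formula.Realize]
  convert hwM using 2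
  · rfl
  · exact funext ht

theorem Theory.exists_finset_forall_exists_realize {T : L.Theory} {α : Type w} {ι : Type*}
    (ψ : ι → L.Formula α)
    (h : ∀ (M : Type (max u v w)) [L.Structure M] [Nonempty M], M ⊨ T →
      ∀ v : α → M, ∃ i, (ψ i).Realize v) :
    ∃ s : Finset ι, ∀ (M : Type (max u v w)) [L.Structure M] [Nonempty M], M ⊨ T →
      ∀ v : α → M, ∃ i ∈ s, (ψ i).Realize v := by
  -- `T' s` says, of the constants of `L[[α]]`, that `T` holds and no `ψ i` with `i ∈ s` does.
  let T' : Finset ι → L[[α]].Theory := fun s =>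
    (L.lhomWithConstants α).onTheory T ∪ (fun i => (ψ i).not.equivSentence) '' s
  have hdir : Directed (· ⊆ ·) T' := Monotone.directed_le fun s s' hs =>
    Set.union_subset_union_right _ (Set.image_mono (Finset.coe_subset.2 hs))
  have hunsat : ¬ Theory.IsSatisfiable (⋃ s, T' s) := by
    rintro ⟨N⟩
    let := (L.lhomWithConstants α).reduct N
    have hN : ∀ s, N ⊨ T' s := fun s => N.is_model.mono (Set.subset_iUnion T' s)
    have : N ⊨ T := ((L.lhomWithConstants α).onTheory_model T).1
      ((hN ∅).mono Set.subset_union_left)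
    obtain ⟨i, hi⟩ := h N this fun a => L.con a
    have := (hN {i}).realize_of_mem _ (Set.mem_union_right _ ⟨i, by simp, rfl⟩)
    rw [Formula.realize_equivSentence, Formula.realize_not] at this
    exact this hi
  obtain ⟨s, hs⟩ := not_forall.1 (mt (isSatisfiable_directed_union_iff hdir).2 hunsat)
  refine ⟨s, fun M _ _ hM v => by_contra fun hv => hs ?_⟩
  let := constantsOn.structure v
  have : M ⊨ T' s := by
    refine Theory.model_union_iff.2 ⟨((L.lhomWithConstants α).onTheory_model T).2 hM, ?_⟩
    refine (Theory.model_iff _).2 ?_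
    rintro _ ⟨i, hi, rfl⟩
    rw [Formula.realize_equivSentence, Formula.realize_not]
    exact fun hψ => hv ⟨i, hi, hψ⟩
  exact ⟨ModelType.of (T' s) M⟩

end FirstOrder.Language

/-- **Herbrand's Theorem** (semantic form). If `T` is a universal theory (every sentence of `T`
is the universal closure of a quantifier-free formula) and `φ(x, y)` is a quantifier-free
formula such that every (nonempty) model of `T` satisfies `∀ x ∃ y, φ(x, y)`, then there are
`k ≥ 1` terms `t₁(x), …, t_k(x)` such that every model of `T` satisfies
`∀ x, φ(x, t₁(x)) ∨ ⋯ ∨ φ(x, t_k(x))`. -/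
theorem herbrand_theorem {L : FirstOrder.Language.{u, v}} (T : L.Theory)
    (hT : ∀ σ ∈ T, ∃ (n : ℕ) (χ : L.BoundedFormula Empty n), χ.IsQF ∧ σ = χ.alls)
    (φ : L.Formula (Fin 2)) (hφ : BoundedFormula.IsQF φ)
    (h : ∀ (M : Type (max u v)) [L.Structure M] [Nonempty M],
      M ⊨ T → ∀ x : M, ∃ y : M, φ.Realize ![x, y]) :
    ∃ k : ℕ, 1 ≤ k ∧ ∃ t : Fin k → L.Term (Fin 1),
      ∀ (M : Type (max u v)) [L.Structure M] [Nonempty M],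
        M ⊨ T → ∀ x : M, ∃ i : Fin k,
          φ.Realize ![x, Term.realize (fun _ : Fin 1 => x) (t i)] := by
  classical
  have := Theory.isUniversal_of_forall_eq_alls hT
  let φ' : L.Formula (Fin 1 ⊕ Fin 1) := φ.relabel finSumFinEquiv.symm
  have realize_φ' {M : Type (max u v)} [L.Structure M] (v w : Fin 1 → M) :
      φ'.Realize (Sum.elim v w) ↔ φ.Realize ![v 0, w 0] := by
    rw [Formula.realize_relabel]
    congr! 1
    funext i
    fin_cases i <;> rfl
  have witness (M : Type (max u v)) [L.Structure M] [Nonempty M] (hM : M ⊨ T) (v : Fin 1 → M) :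
      ∃ t : Fin 1 → L.Term (Fin 1), Formula.Realize (φ'.subst (Sum.elim Term.var t)) v := by
    refine Theory.IsUniversal.exists_terms_realize_subst (T := T) (hφ.relabel _) ?_ v
    intro N _ _ hN v
    obtain ⟨y, hy⟩ := h N hN (v 0)
    exact ⟨![y], (realize_φ' v ![y]).2 hy⟩
  obtain ⟨s, hs⟩ := Theory.exists_finset_forall_exists_realize _ witness
  let s' := insert (fun _ => Term.var 0) s
  refine ⟨s'.card, Finset.card_pos.2 (Finset.insert_nonempty _ _),
    fun i => (s'.equivFin.symm i : Fin 1 → L.Term (Fin 1)) 0, fun M _ _ hM x => ?_⟩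
  obtain ⟨t, hts, ht⟩ := hs M hM fun _ => x
  refine ⟨s'.equivFin ⟨t, Finset.mem_insert_of_mem hts⟩, ?_⟩
  rw [Formula.realize_subst_sumElim_var, realize_φ'] at ht
  simpa only [Equiv.symm_apply_apply] using ht
end

section
/- KPT Theorem (semantic form): Let L be a first-order language and let T be a universal L-theory, i.e., every sentence of T is the universal closure of a quantifier-free formula. Let φ(w,u,v) be a quantifier-free L-formula with free variables among {w,u,v}, and suppose that every model of T satisfies ∀w ∃u ∀v φ(w,u,v). Then there exist a natural number k ≥ 1 and L-terms t₁, …, t_k, where each tᵢ has free variables among {w, v₁, …, v_{i−1}}, such that every model of T satisfies ∀w ∀v₁ … ∀v_k ( φ(w, t₁(w), v₁) ∨ φ(w, t₂(w,v₁), v₂) ∨ … ∨ φ(w, t_k(w, v₁, …, v_{k−1}), v_k) ). -/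
open FirstOrder FirstOrder.Language

universe u v

namespace KPTProof

open Classical in
/-- Terms built from a variable `w`, `L`-function symbols, and a witness operator `d`. -/
inductive WT (L : FirstOrder.Language.{u, v}) : Type u
  | w : WT L
  | d : WT L → WT L
  | func : ∀ {n : ℕ}, L.Functions n → (Fin n → WT L) → WT L

variable {L : FirstOrder.Language.{u, v}}

noncomputable local instance : DecidableEq (WT L) := Classical.decEq _

/-- depth rank -/
def depth : WT L → ℕ
  | .w => 0
  | .d t => depth t + 1
  | .func _ ts => (Finset.univ.sup fun i => depth (ts i)) + 1

/-- witnesses occurring in a term -/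
noncomputable def wits : WT L → Finset (WT L)
  | .w => ∅
  | .d t => insert t (wits t)
  | .func _ ts => Finset.univ.biUnion fun i => wits (ts i)

lemma wits_subset {s t : WT L} (h : s ∈ wits t) : wits s ⊆ wits t := by
  induction t with
  | w => simp [wits] at h
  | d t ih =>
    simp only [wits, Finset.mem_insert] at h
    rcases h with rfl | h
    · exact Finset.subset_insert _ _
    · exact (ih h).trans (Finset.subset_insert _ _)
  | func f ts ih =>
    simp only [wits, Finset.mem_biUnion] at h
    obtain ⟨i, -, hi⟩ := h
    refine (ih i hi).trans ?_
    intro x hx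
    simp only [wits, Finset.mem_biUnion]
    exact ⟨i, Finset.mem_univ _, hx⟩

lemma depth_lt_of_mem_wits {s t : WT L} (h : s ∈ wits t) : depth s < depth t := by
  induction t with
  | w => simp [wits] at h
  | d t ih =>
    simp only [wits, Finset.mem_insert] at h
    rcases h with rfl | h
    · simp [depth]
    · exact (ih h).trans (by simp [depth])
  | func f ts ih =>
    simp only [wits, Finset.mem_biUnion] at h
    obtain ⟨i, -, hi⟩ := h
    calc depth s < depth (ts i) := ih i hi
    _ ≤ Finset.univ.sup fun i => depth (ts i) := Finset.le_sup (f := fun i => depth (ts i)) (Finset.mem_univ i)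
    _ < _ := Nat.lt_succ_self _

/-- translation to an `L`-term with variables `Option (WT L)`: `none` is `w`,
`some s` is the witness `d s`. -/
def toTerm : WT L → L.Term (Option (WT L))
  | .w => Term.var none
  | .d t => Term.var (some t)
  | .func f ts => Term.func f fun i => toTerm (ts i)

lemma realize_toTerm_congr {M : Type*} [L.Structure M] {t : WT L}
    {x y : Option (WT L) → M} (hn : x none = y none)
    (hw : ∀ s ∈ wits t, x (some s) = y (some s)) :
    (toTerm t).realize x = (toTerm t).realize y := by
  induction t with
  | w => simpa [toTerm] using hn
  | d t ih =>
    simpa [toTerm] using hw t (by simp [wits])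
  | func f ts ih =>
    simp only [toTerm, Term.realize_func]
    congr 1
    funext i
    exact ih i (fun s hs => hw s (by
      simp only [wits, Finset.mem_biUnion]; exact ⟨i, Finset.mem_univ _, hs⟩))

/-- representation as a closed term in the language with constants -/
def rep : WT L → (L[[Option (WT L)]]).Term Empty
  | .w => (Language.con L (none : Option (WT L))).term
  | .d t => (Language.con L (some t : Option (WT L))).term
  | .func f ts => Term.func (Sum.inl f) fun i => rep (ts i)

/-- The sentence `¬ φ(c, t, d_t)`. -/
noncomputable def ax (φ : L.Formula (Fin 3)) (t : WT L) : (L[[Option (WT L)]]).Sentence :=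
  (((L.lhomWithConstants (Option (WT L))).onFormula φ).subst
    ![rep .w, rep t, rep (.d t)]).not

variable {M : Type*} [L.Structure M] [(L[[Option (WT L)]]).Structure M]
  [(L.lhomWithConstants (Option (WT L))).IsExpansionOn M]

/-- interpretation of the constants -/
def conMap (M : Type*) [(L[[Option (WT L)]]).Structure M] : Option (WT L) → M :=
  fun o => ((Language.con L o : (L[[Option (WT L)]]).Constants) : M)

lemma realize_rep (t : WT L) :
    (rep t).realize (default : Empty → M) =
      (toTerm t).realize (conMap M) := by
  induction t with
  | w => simp [rep, toTerm, conMap]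
  | d t ih => simp [rep, toTerm, conMap]
  | func f ts ih =>
    simp only [rep, toTerm, Term.realize_func]
    refine (withConstants_funMap_sumInl (L := L) (α := Option (WT L)) (M := M)).trans ?_
    congr 1
    funext i
    exact ih i

lemma realize_ax (φ : L.Formula (Fin 3)) (t : WT L) :
    @Sentence.Realize (L[[Option (WT L)]]) M _ (ax φ t) ↔ ¬ φ.Realize
      (![(toTerm (WT.w : WT L)).realize (conMap (L := L) M),
          (toTerm t).realize (conMap (L := L) M), conMap (L := L) M (some t)] :
        Fin 3 → M) := by
  have hr : ∀ (s : WT L), (rep s).realize (default : Empty → M) = (toTerm s).realize (conMap M) :=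
    realize_rep
  simp only [ax, Sentence.Realize, Formula.Realize, BoundedFormula.realize_not,
    BoundedFormula.realize_subst]
  rw [show (BoundedFormula.Realize ((L.lhomWithConstants (Option (WT L))).onFormula φ)
      (fun a => Term.realize default (![rep WT.w, rep t, rep (WT.d t)] a)) default) ↔
      BoundedFormula.Realize φ
      (fun a => Term.realize default (![rep WT.w, rep t, rep (WT.d t)] a)) default from
    LHom.realize_onFormula _ φ]
  have harg : (fun a => Term.realize (default : Empty → M) (![rep WT.w, rep t, rep (WT.d t)] a)) =
      ![(toTerm (WT.w : WT L)).realize (conMap (L := L) M),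
        (toTerm t).realize (conMap (L := L) M), conMap (L := L) M (some t)] := by
    funext a
    fin_cases a
    · simpa using hr WT.w
    · simpa using hr t
    · simp [rep, conMap]
  rw [harg]


/-- The theory `T` plus all the sentences `¬ φ(c, t, d_t)`. -/
noncomputable def gam (T : L.Theory) (φ : L.Formula (Fin 3)) : (L[[Option (WT L)]]).Theory :=
  (L.lhomWithConstants (Option (WT L))).onTheory T ∪ Set.range (ax φ)

lemma isUniversal_alls : ∀ {n} {χ : L.BoundedFormula Empty n},
    χ.IsUniversal → χ.alls.IsUniversal
  | 0, _, h => h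
  | _+1, χ, h => isUniversal_alls (χ := χ.all) h.all

lemma step_b (T : L.Theory)
    (hT : ∀ σ ∈ T, ∃ (n : ℕ) (χ : L.BoundedFormula Empty n), χ.IsQF ∧ σ = χ.alls)
    (φ : L.Formula (Fin 3)) (hφ : BoundedFormula.IsQF φ)
    (h : ∀ (M : Type (max u v)) [L.Structure M] [Nonempty M],
      M ⊨ T → ∀ w : M, ∃ u : M, ∀ v : M, φ.Realize ![w, u, v])
    (hsat : (gam T φ).IsSatisfiable) : False := by
  obtain ⟨N⟩ := hsat
  letI : L.Structure N := (L.lhomWithConstants (Option (WT L))).reduct N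
  haveI : (L.lhomWithConstants (Option (WT L))).IsExpansionOn N :=
    LHom.isExpansionOn_reduct _ _
  set valN : WT L → N := fun t => (toTerm t).realize (conMap (L := L) N) with hvalN
  have hfun : ∀ {n : ℕ} (f : L.Functions n) (x : Fin n → N),
      (∀ i, x i ∈ Set.range valN) → Structure.funMap f x ∈ Set.range valN := by
    intro n f x hx
    choose g hg using hx
    refine ⟨WT.func f g, ?_⟩
    simp only [hvalN, toTerm, Term.realize_func]
    congr 1
    funext i
    exact hg i
  let S : L.Substructure N := ⟨Set.range valN, hfun⟩
  haveI hNT : N ⊨ T :=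
    ((L.lhomWithConstants (Option (WT L))).onTheory_model T).1
      (N.is_model.mono Set.subset_union_left)
  haveI : T.IsUniversal := ⟨fun σ hσ => by
    obtain ⟨n, χ, hχ, rfl⟩ := hT σ hσ
    exact isUniversal_alls hχ.isUniversal⟩
  haveI : Nonempty S := ⟨⟨valN .w, Set.mem_range_self _⟩⟩
  obtain ⟨u, hu⟩ := h S inferInstance ⟨valN .w, Set.mem_range_self _⟩
  obtain ⟨t0, ht0⟩ := u.2
  have hv := hu ⟨valN (.d t0), Set.mem_range_self _⟩
  have hv' : BoundedFormula.Realize φ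
      ![⟨valN .w, Set.mem_range_self _⟩, u, ⟨valN (.d t0), Set.mem_range_self _⟩]
      (default : Fin 0 → S) := hv
  have htrans := (hφ.realize_embedding (S.subtype)
    (v := ![⟨valN .w, Set.mem_range_self _⟩, u, ⟨valN (.d t0), Set.mem_range_self _⟩])
    (xs := (default : Fin 0 → S))).2 hv'
  have hax : @Sentence.Realize (L[[Option (WT L)]]) N _ (ax φ t0) :=
    Theory.realize_sentence_of_mem (gam T φ) (Set.mem_union_right _ ⟨t0, rfl⟩)
  rw [realize_ax] at hax
  apply hax
  have harg : (⇑S.subtype ∘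
      (![⟨valN .w, Set.mem_range_self _⟩, u, ⟨valN (.d t0), Set.mem_range_self _⟩] :
        Fin 3 → S)) =
      ![Term.realize (conMap (L := L) N) (toTerm WT.w),
        Term.realize (conMap (L := L) N) (toTerm t0), conMap (L := L) N (some t0)] := by
    funext i
    fin_cases i
    · rfl
    · exact ht0.symm
    · rfl
  rw [harg, Subsingleton.elim ((⇑S.subtype) ∘ (default : Fin 0 → S))
    (default : Fin 0 → N)] at htrans
  exact htrans


lemma fin_cons_mk_succ {n : ℕ} {C : Sort*} (x : C) (p : Fin n → C) (j : ℕ)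
    (h : j + 1 < n + 1) :
    (Fin.cons x p : Fin (n + 1) → C) ⟨j + 1, h⟩ = p ⟨j, Nat.lt_of_succ_lt_succ h⟩ := by
  have e : (⟨j + 1, h⟩ : Fin (n + 1)) = Fin.succ ⟨j, Nat.lt_of_succ_lt_succ h⟩ := by
    apply Fin.ext
    simp
  rw [e, Fin.cons_succ]

lemma step_a (T : L.Theory) (φ : L.Formula (Fin 3))
    (hc : ∀ (k : ℕ), 1 ≤ k → ∀ tt : (i : Fin k) → L.Term (Fin (i.val + 1)),
      ∃ (M : Theory.ModelType.{u, v, max u v} T) (w : M) (v : Fin k → M),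
        ∀ i : Fin k, ¬ φ.Realize
          ![w, Term.realize (Fin.cons w fun j : Fin i.val =>
              v ⟨j.val, j.isLt.trans i.isLt⟩) (tt i), v i]) :
    (gam T φ).IsFinitelySatisfiable := by
  classical
  intro T0 hT0
  set f : (L[[Option (WT L)]]).Sentence → WT L := fun ψ =>
    if h : ∃ t : WT L, ax φ t = ψ then h.choose else WT.w with hf
  set S : Finset (WT L) := T0.image f ∪ (T0.image f).biUnion wits with hS
  have hSclosed : ∀ t ∈ S, wits t ⊆ S := by
    intro t ht
    rw [hS] at ht ⊢
    rcases Finset.mem_union.1 ht with ht | ht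
    · intro s hs; exact Finset.mem_union_right _ (Finset.mem_biUnion.2 ⟨t, ht, hs⟩)
    · obtain ⟨t0, ht0, hw⟩ := Finset.mem_biUnion.1 ht
      intro s hs
      exact Finset.mem_union_right _ (Finset.mem_biUnion.2 ⟨t0, ht0, wits_subset hw hs⟩)
  set l : List (WT L) := S.toList.mergeSort (fun s t => decide (depth s ≤ depth t)) with hl
  have hmeml : ∀ t ∈ S, t ∈ l := fun t ht => by
    rw [hl, List.mem_mergeSort]; exact Finset.mem_toList.2 ht
  have hpw : List.Pairwise (fun a b : WT L => depth a ≤ depth b) l := by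
    have := List.pairwise_mergeSort (le := fun s t : WT L => decide (depth s ≤ depth t))
      (by intro a b c; simp only [decide_eq_true_eq]; omega)
      (by intro a b; simp only [Bool.or_eq_true, decide_eq_true_eq]; exact Nat.le_total _ _)
      S.toList
    rw [← hl] at this
    exact this.imp (by simp)
  have hmono : ∀ s t : WT L, s ∈ l → t ∈ l → depth s < depth t →
      l.idxOf s < l.idxOf t := by
    intro s t hs ht hd
    by_contra hle
    push_neg at hle
    have hne : l.idxOf t ≠ l.idxOf s := by
      intro he
      have : t = s := (List.idxOf_inj ht).1 he
      subst this
      omega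
    have hlt : l.idxOf t < l.idxOf s := by omega
    have := (List.pairwise_iff_get.1 hpw) ⟨_, List.idxOf_lt_length_iff.2 ht⟩
      ⟨_, List.idxOf_lt_length_iff.2 hs⟩ hlt
    rw [List.get_eq_getElem, List.get_eq_getElem, List.getElem_idxOf,
      List.getElem_idxOf] at this
    omega
  set K := l.length with hK
  set ρ : (i : Fin (K+1)) → Option (WT L) → Fin (i.val+1) := fun i o =>
    match o with
    | none => 0
    | some s => if h : l.idxOf s + 1 < i.val + 1 then ⟨l.idxOf s + 1, h⟩ else 0
    with hρ
  set tt : (i : Fin (K+1)) → L.Term (Fin (i.val+1)) := fun i =>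
    if h : i.val < K then (toTerm (l.get ⟨i.val, h⟩)).relabel (ρ i) else Term.var 0 with htt
  obtain ⟨M, a, b, hctr⟩ := hc (K+1) (by omega) tt
  letI : (constantsOn (Option (WT L))).Structure M :=
    constantsOn.structure (fun o =>
      match o with
      | none => a
      | some s => if h : l.idxOf s < K then b ⟨l.idxOf s, by omega⟩ else a)
  have hg_none : conMap (L := L) M none = a := rfl
  have hg_some : ∀ (s : WT L) (h : l.idxOf s < K),
      conMap (L := L) M (some s) = b ⟨l.idxOf s, by omega⟩ := by
    intro s h
    show (if h : l.idxOf s < K then b ⟨l.idxOf s, by omega⟩ else a) = _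
    rw [dif_pos h]
  have hax_model : ∀ t ∈ S, @Sentence.Realize (L[[Option (WT L)]]) M _ (ax φ t) := by
    intro t htS
    have htl : t ∈ l := hmeml t htS
    have hidx : l.idxOf t < K := List.idxOf_lt_length_iff.2 htl
    rw [realize_ax]
    set i : Fin (K+1) := ⟨l.idxOf t, by omega⟩ with hi
    have hival : i.val = l.idxOf t := rfl
    have e0 : a = (toTerm (WT.w : WT L)).realize (conMap (L := L) M) := rfl
    have e2 : b i = conMap (L := L) M (some t) := (hg_some t hidx).symm
    have e1 : Term.realize (Fin.cons a fun j : Fin i.val => b ⟨j.val, j.isLt.trans i.isLt⟩)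
        (tt i) = (toTerm t).realize (conMap (L := L) M) := by
      have hgetel : l.get ⟨i.val, hidx⟩ = t := by
        rw [List.get_eq_getElem]; exact List.getElem_idxOf hidx
      rw [htt]
      simp only [dif_pos (show i.val < K from hidx)]
      rw [hgetel, Term.realize_relabel]
      refine (realize_toTerm_congr (L := L) (M := M) (t := t) (x := conMap (L := L) M)
        (y := (Fin.cons a fun j : Fin i.val => b ⟨j.val, j.isLt.trans i.isLt⟩) ∘ (ρ i))
        rfl ?_).symm
      intro s hs
      have hsS : s ∈ S := hSclosed t htS hs
      have hsl : s ∈ l := hmeml s hsS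
      have hlt : l.idxOf s < l.idxOf t := hmono s t hsl htl (depth_lt_of_mem_wits hs)
      rw [hg_some s (by omega), hρ]
      dsimp only [Function.comp_apply]
      rw [dif_pos (show l.idxOf s + 1 < i.val + 1 by omega)]
      rw [fin_cons_mk_succ]
    intro hφreal
    apply hctr i
    rw [show (![a, Term.realize (Fin.cons a fun j : Fin i.val =>
        b ⟨j.val, j.isLt.trans i.isLt⟩) (tt i), b i] : Fin 3 → M) =
        ![(toTerm (WT.w : WT L)).realize (conMap (L := L) M),
          (toTerm t).realize (conMap (L := L) M), conMap (L := L) M (some t)] from by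
      funext x
      fin_cases x
      · exact e0
      · exact e1
      · exact e2]
    exact hφreal
  haveI : M ⊨ (↑T0 : (L[[Option (WT L)]]).Theory) := by
    rw [Theory.model_iff]
    intro ψ hψ
    rcases hT0 hψ with honT | hrange
    · obtain ⟨σ0, hσ0, rfl⟩ := honT
      rw [LHom.realize_onSentence]
      exact Theory.realize_sentence_of_mem T hσ0
    · obtain ⟨t, ht⟩ := hrange
      have hex : ∃ t0 : WT L, ax φ t0 = ψ := ⟨t, ht⟩
      have hfψ : ax φ (f ψ) = ψ := by
        rw [hf]; simp only [dif_pos hex]; exact hex.choose_spec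
      rw [← hfψ]
      exact hax_model (f ψ)
        (by rw [hS]; exact Finset.mem_union_left _ (Finset.mem_image_of_mem f hψ))
  exact ⟨Theory.ModelType.of _ M⟩


end KPTProof

/-- **KPT Theorem** (semantic form). If `T` is a universal theory (every sentence of `T` is the
universal closure of a quantifier-free formula) and `φ(w, u, v)` is a quantifier-free formula
such that every (nonempty) model of `T` satisfies `∀ w ∃ u ∀ v, φ(w, u, v)`, then there are
`k ≥ 1` terms `t₁, …, t_k`, where `tᵢ` has free variables among `{w, v₁, …, v_{i-1}}`, such
that every model of `T` satisfies
`∀ w ∀ v₁ … ∀ v_k, φ(w, t₁(w), v₁) ∨ φ(w, t₂(w, v₁), v₂) ∨ ⋯ ∨ φ(w, t_k(w, v₁, …, v_{k-1}), v_k)`. -/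
theorem kpt_theorem {L : FirstOrder.Language.{u, v}} (T : L.Theory)
    (hT : ∀ σ ∈ T, ∃ (n : ℕ) (χ : L.BoundedFormula Empty n), χ.IsQF ∧ σ = χ.alls)
    (φ : L.Formula (Fin 3)) (hφ : BoundedFormula.IsQF φ)
    (h : ∀ (M : Type (max u v)) [L.Structure M] [Nonempty M],
      M ⊨ T → ∀ w : M, ∃ u : M, ∀ v : M, φ.Realize ![w, u, v]) :
    ∃ k : ℕ, 1 ≤ k ∧ ∃ t : (i : Fin k) → L.Term (Fin (i.val + 1)),
      ∀ (M : Type (max u v)) [L.Structure M] [Nonempty M],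
        M ⊨ T → ∀ (w : M) (v : Fin k → M), ∃ i : Fin k,
          φ.Realize
            ![w,
              Term.realize
                (Fin.cons w (fun j : Fin i.val => v ⟨j.val, j.isLt.trans i.isLt⟩)) (t i),
              v i] := by
  by_contra hcon
  push_neg at hcon
  have hc : ∀ (k : ℕ), 1 ≤ k → ∀ tt : (i : Fin k) → L.Term (Fin (i.val + 1)),
      ∃ (M : FirstOrder.Language.Theory.ModelType.{u, v, max u v} T) (w : M) (v : Fin k → M),
        ∀ i : Fin k, ¬ φ.Realize
          ![w, Term.realize (Fin.cons w fun j : Fin i.val =>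
              v ⟨j.val, j.isLt.trans i.isLt⟩) (tt i), v i] := by
    intro k hk tt
    obtain ⟨M, str, hne, hmod, w, v, hi⟩ := hcon k hk tt
    letI := str
    haveI := hne
    haveI := hmod
    exact ⟨Theory.ModelType.of T M, w, v, hi⟩
  exact KPTProof.step_b T hT φ hφ h
    (Theory.isSatisfiable_iff_isFinitelySatisfiable.2 (KPTProof.step_a T φ hc))
end

section
/- Subbotovskaya's formula lower bound for parity: For every n ≥ 1, every Boolean formula F over the variables x₁, …, xₙ with size(F) < n^{3/2}, and every b ∈ {0,1}, there exists an input y ∈ {0,1}ⁿ such that F(y) ≠ ⊕(y) + b (mod 2). In particular, every Boolean formula computing the parity function ⊕ on n bits, and every Boolean formula computing its complement, has size at least n^{3/2}. -/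
/-- Boolean formulas over variables `x₁, …, xₙ` (indexed by `Fin n`): the constants `0`, `1`
(of size 0), literals `xᵢ` and `¬xᵢ` (of size 1), and conjunctions/disjunctions, whose size is
the sum of the sizes (so the size of a formula is its number of leaves labelled by literals). -/
inductive BFormula (n : ℕ) : Type
  | const : Bool → BFormula n
  /-- `lit i true` is the literal `xᵢ`; `lit i false` is the literal `¬xᵢ`. -/
  | lit : Fin n → Bool → BFormula n
  | and : BFormula n → BFormula n → BFormula n
  | or : BFormula n → BFormula n → BFormula n

namespace BFormula

/-- The size of a Boolean formula: its number of literal leaves. -/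
def size {n : ℕ} : BFormula n → ℕ
  | const _ => 0
  | lit _ _ => 1
  | and F G => size F + size G
  | or F G => size F + size G

/-- Evaluation of a Boolean formula on an assignment `y : Fin n → Bool`. -/
def eval {n : ℕ} (y : Fin n → Bool) : BFormula n → Bool
  | const b => b
  | lit i b => if b then y i else !(y i)
  | and F G => eval y F && eval y G
  | or F G => eval y F || eval y G

end BFormula

/-- The parity function `⊕(y) = y₁ + ⋯ + yₙ (mod 2)`. -/
def bparity {n : ℕ} (y : Fin n → Bool) : Bool :=
  decide ((Finset.univ.filter fun i => y i = true).card % 2 = 1)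

namespace Subb
variable {n : ℕ}

/-- Flip coordinate `i` of the assignment `a`. -/
def flip (a : Fin n → Bool) (i : Fin n) : Fin n → Bool := Function.update a i (!(a i))

lemma flip_self (a : Fin n → Bool) (i : Fin n) : flip a i i = !(a i) :=
  Function.update_self ..

lemma flip_ne (a : Fin n → Bool) {i j : Fin n} (h : j ≠ i) : flip a i j = a j :=
  Function.update_of_ne h ..

lemma flip_flip (a : Fin n → Bool) (i : Fin n) : flip (flip a i) i = a := by
  funext j
  by_cases h : j = i
  · subst h; rw [flip_self, flip_self, Bool.not_not]
  · rw [flip_ne _ h, flip_ne _ h]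

lemma bparity_flip (a : Fin n → Bool) (i : Fin n) : bparity (flip a i) = !(bparity a) := by
  unfold bparity
  have hcard : ∀ y : Fin n → Bool,
      (Finset.univ.filter fun j => y j = true).card
        = ∑ j ∈ Finset.univ.erase i, (if y j = true then 1 else 0)
          + (if y i = true then 1 else 0) := by
    intro y
    rw [Finset.card_filter, ← Finset.sum_erase_add _ _ (Finset.mem_univ i)]
  have hagree : ∑ j ∈ Finset.univ.erase i, (if flip a i j = true then 1 else 0)
      = ∑ j ∈ Finset.univ.erase i, (if a j = true then 1 else 0) := by
    apply Finset.sum_congr rfl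
    intro j hj
    rw [flip_ne _ (Finset.ne_of_mem_erase hj)]
  rw [hcard, hcard, hagree, flip_self]
  set T := ∑ j ∈ Finset.univ.erase i, (if a j = true then 1 else 0) with hT
  rw [← decide_not]
  apply decide_eq_decide.mpr
  cases h : a i <;> simp <;> omega

lemma bparity_allfalse : bparity (fun _ : Fin n => false) = false := by
  unfold bparity
  simp

/-- Pairs of neighbours (at Hamming distance `1`) in `A × B`. -/
def nbrs (A B : Finset (Fin n → Bool)) : Finset ((Fin n → Bool) × (Fin n → Bool)) :=
  (A ×ˢ B).filter (fun p => ∃ i, p.2 = flip p.1 i)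

/-- Two-term Cauchy–Schwarz step used in Khrapchenko's argument. -/
lemma cauchy2 (s₁ s₂ t₁ t₂ c₁ c₂ : ℝ) (hs₁ : 0 ≤ s₁) (hs₂ : 0 ≤ s₂) (ht₁ : 0 ≤ t₁)
    (ht₂ : 0 ≤ t₂) (hc₁ : 0 ≤ c₁) (hc₂ : 0 ≤ c₂)
    (h₁ : c₁ ^ 2 ≤ s₁ * t₁) (h₂ : c₂ ^ 2 ≤ s₂ * t₂) :
    (c₁ + c₂) ^ 2 ≤ (s₁ + s₂) * (t₁ + t₂) := by
  have key : 2 * (c₁ * c₂) ≤ s₁ * t₂ + s₂ * t₁ := by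
    have hsq : (2 * (c₁ * c₂)) ^ 2 ≤ (s₁ * t₂ + s₂ * t₁) ^ 2 := by
      nlinarith [sq_nonneg (s₁ * t₂ - s₂ * t₁), mul_le_mul h₁ h₂ (sq_nonneg c₂) (by positivity),
        sq_nonneg (c₁ * c₂)]
    have := Real.sqrt_le_sqrt hsq
    rwa [Real.sqrt_sq (by positivity), Real.sqrt_sq (by positivity)] at this
  nlinarith

lemma nbrs_union_left (A₁ A₂ B : Finset (Fin n → Bool)) :
    nbrs (A₁ ∪ A₂) B = nbrs A₁ B ∪ nbrs A₂ B := by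
  unfold nbrs
  rw [Finset.union_product, Finset.filter_union]

lemma nbrs_union_right (A B₁ B₂ : Finset (Fin n → Bool)) :
    nbrs A (B₁ ∪ B₂) = nbrs A B₁ ∪ nbrs A B₂ := by
  unfold nbrs
  rw [Finset.product_union, Finset.filter_union]

lemma nbrs_disjoint_left {A₁ A₂ : Finset (Fin n → Bool)} (B : Finset (Fin n → Bool))
    (h : Disjoint A₁ A₂) : Disjoint (nbrs A₁ B) (nbrs A₂ B) := by
  rw [Finset.disjoint_left] at h ⊢
  intro p hp hq
  simp only [nbrs, Finset.mem_filter, Finset.mem_product] at hp hq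
  exact h hp.1.1 hq.1.1

lemma nbrs_disjoint_right (A : Finset (Fin n → Bool)) {B₁ B₂ : Finset (Fin n → Bool)}
    (h : Disjoint B₁ B₂) : Disjoint (nbrs A B₁) (nbrs A B₂) := by
  rw [Finset.disjoint_left] at h ⊢
  intro p hp hq
  simp only [nbrs, Finset.mem_filter, Finset.mem_product] at hp hq
  exact h hp.1.2 hq.1.2

/-- **Khrapchenko's bound**: if `F` is `0` on `A` and `1` on `B`, then the number `c` of
pairs in `A × B` at Hamming distance `1` satisfies `c² ≤ size(F)·|A|·|B|`. -/
lemma khrapchenko (F : BFormula n) (A B : Finset (Fin n → Bool))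
    (hA : ∀ a ∈ A, F.eval a = false) (hB : ∀ b ∈ B, F.eval b = true) :
    (nbrs A B).card ^ 2 ≤ F.size * A.card * B.card := by
  induction F generalizing A B with
  | const b =>
    cases b with
    | false =>
      have hBe : B = ∅ := by
        refine Finset.eq_empty_of_forall_notMem fun b hb => ?_
        simpa [BFormula.eval] using hB b hb
      subst hBe
      simp [nbrs]
    | true =>
      have hAe : A = ∅ := by
        refine Finset.eq_empty_of_forall_notMem fun a ha => ?_
        simpa [BFormula.eval] using hA a ha
      subst hAe
      simp [nbrs]
  | lit i v =>
    have key : ∀ p ∈ nbrs A B, p.2 = flip p.1 i := by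
      rintro ⟨a, b⟩ hp
      simp only [nbrs, Finset.mem_filter, Finset.mem_product] at hp
      obtain ⟨⟨haA, hbB⟩, j, hj⟩ := hp
      have ha := hA a haA
      have hb := hB b hbB
      have hab : a i ≠ b i := by
        cases v <;> simp [BFormula.eval] at ha hb <;> simp [ha, hb]
      by_cases hji : j = i
      · subst hji; exact hj
      · exfalso
        apply hab
        rw [hj, flip_ne _ (Ne.symm hji)]
    have h1 : (nbrs A B).card ≤ A.card := by
      apply Finset.card_le_card_of_injOn Prod.fst
      · rintro ⟨a, b⟩ hp
        simp only [nbrs, Finset.mem_filter, Finset.mem_product] at hp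
        exact (Finset.mem_product.mp (Finset.mem_filter.mp hp).1).1
      · rintro ⟨a, b⟩ hp ⟨a', b'⟩ hq h
        simp only at h
        have := key _ hp
        have := key _ hq
        subst h
        simp_all
    have h2 : (nbrs A B).card ≤ B.card := by
      apply Finset.card_le_card_of_injOn Prod.snd
      · rintro ⟨a, b⟩ hp
        simp only [nbrs, Finset.mem_filter, Finset.mem_product] at hp
        exact (Finset.mem_product.mp (Finset.mem_filter.mp hp).1).2
      · rintro ⟨a, b⟩ hp ⟨a', b'⟩ hq h
        simp only at h
        have k1 := key _ hp
        have k2 := key _ hq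
        subst h
        simp only at k1 k2
        have : a = a' := by
          have : flip b i = a ∧ flip b i = a' := by
            constructor
            · rw [k1, flip_flip]
            · rw [k2, flip_flip]
          rw [← this.1, this.2]
        simp [this]
    calc (nbrs A B).card ^ 2 = (nbrs A B).card * (nbrs A B).card := sq _
      _ ≤ A.card * B.card := Nat.mul_le_mul h1 h2
      _ = (BFormula.lit i v).size * A.card * B.card := by simp [BFormula.size]
  | and F₁ F₂ ih₁ ih₂ =>
    set A₁ := A.filter (fun a => F₁.eval a = false) with hA₁def
    set A₂ := A.filter (fun a => ¬ F₁.eval a = false) with hA₂def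
    have hunion : A₁ ∪ A₂ = A := Finset.filter_union_filter_not_eq _ A
    have hdisj : Disjoint A₁ A₂ := Finset.disjoint_filter_filter_not A A _
    have hcards : A₁.card + A₂.card = A.card := by
      rw [← Finset.card_union_of_disjoint hdisj, hunion]
    have hA1 : ∀ a ∈ A₁, F₁.eval a = false := fun a ha => (Finset.mem_filter.mp ha).2
    have hA2 : ∀ a ∈ A₂, F₂.eval a = false := by
      intro a ha
      have h := Finset.mem_filter.mp ha
      have := hA a h.1
      simp only [BFormula.eval] at this
      rcases Bool.and_eq_false_iff.mp this with h' | h'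
      · exact absurd h' h.2
      · exact h'
    have hB1 : ∀ b ∈ B, F₁.eval b = true := by
      intro b hb
      have := hB b hb
      simp only [BFormula.eval, Bool.and_eq_true] at this
      exact this.1
    have hB2 : ∀ b ∈ B, F₂.eval b = true := by
      intro b hb
      have := hB b hb
      simp only [BFormula.eval, Bool.and_eq_true] at this
      exact this.2
    have hsplit : (nbrs A B).card = (nbrs A₁ B).card + (nbrs A₂ B).card := by
      rw [← hunion, nbrs_union_left, Finset.card_union_of_disjoint (nbrs_disjoint_left _ hdisj)]
    have h₁ := ih₁ A₁ B hA1 hB1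
    have h₂ := ih₂ A₂ B hA2 hB2
    have h₁' : ((nbrs A₁ B).card : ℝ) ^ 2 ≤ (F₁.size : ℝ) * ((A₁.card : ℝ) * B.card) := by
      rw [← mul_assoc]; exact_mod_cast h₁
    have h₂' : ((nbrs A₂ B).card : ℝ) ^ 2 ≤ (F₂.size : ℝ) * ((A₂.card : ℝ) * B.card) := by
      rw [← mul_assoc]; exact_mod_cast h₂
    have goalR : ((nbrs A B).card : ℝ) ^ 2 ≤
        ((F₁.size : ℝ) + F₂.size) * A.card * B.card := by
      rw [hsplit, ← hcards]
      push_cast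
      calc ((nbrs A₁ B).card + (nbrs A₂ B).card : ℝ) ^ 2
          ≤ ((F₁.size : ℝ) + F₂.size) * ((A₁.card : ℝ) * B.card + (A₂.card : ℝ) * B.card) :=
            cauchy2 _ _ _ _ _ _ (by positivity) (by positivity) (by positivity)
              (by positivity) (by positivity) (by positivity) h₁' h₂'
        _ = ((F₁.size : ℝ) + F₂.size) * ((A₁.card : ℝ) + A₂.card) * B.card := by ring
    show (nbrs A B).card ^ 2 ≤ (F₁.size + F₂.size) * A.card * B.card
    exact_mod_cast goalR
  | or F₁ F₂ ih₁ ih₂ =>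
    set B₁ := B.filter (fun b => F₁.eval b = true) with hB₁def
    set B₂ := B.filter (fun b => ¬ F₁.eval b = true) with hB₂def
    have hunion : B₁ ∪ B₂ = B := Finset.filter_union_filter_not_eq _ B
    have hdisj : Disjoint B₁ B₂ := Finset.disjoint_filter_filter_not B B _
    have hcards : B₁.card + B₂.card = B.card := by
      rw [← Finset.card_union_of_disjoint hdisj, hunion]
    have hB1 : ∀ b ∈ B₁, F₁.eval b = true := fun b hb => (Finset.mem_filter.mp hb).2
    have hB2 : ∀ b ∈ B₂, F₂.eval b = true := by
      intro b hb
      have h := Finset.mem_filter.mp hb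
      have := hB b h.1
      simp only [BFormula.eval, Bool.or_eq_true] at this
      rcases this with h' | h'
      · exact absurd h' h.2
      · exact h'
    have hA1 : ∀ a ∈ A, F₁.eval a = false := by
      intro a ha
      have := hA a ha
      simp only [BFormula.eval, Bool.or_eq_false_iff] at this
      exact this.1
    have hA2 : ∀ a ∈ A, F₂.eval a = false := by
      intro a ha
      have := hA a ha
      simp only [BFormula.eval, Bool.or_eq_false_iff] at this
      exact this.2
    have hsplit : (nbrs A B).card = (nbrs A B₁).card + (nbrs A B₂).card := by
      rw [← hunion, nbrs_union_right, Finset.card_union_of_disjoint (nbrs_disjoint_right _ hdisj)]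
    have h₁ := ih₁ A B₁ hA1 hB1
    have h₂ := ih₂ A B₂ hA2 hB2
    have h₁' : ((nbrs A B₁).card : ℝ) ^ 2 ≤ (F₁.size : ℝ) * ((A.card : ℝ) * B₁.card) := by
      rw [← mul_assoc]; exact_mod_cast h₁
    have h₂' : ((nbrs A B₂).card : ℝ) ^ 2 ≤ (F₂.size : ℝ) * ((A.card : ℝ) * B₂.card) := by
      rw [← mul_assoc]; exact_mod_cast h₂
    have goalR : ((nbrs A B).card : ℝ) ^ 2 ≤
        ((F₁.size : ℝ) + F₂.size) * A.card * B.card := by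
      rw [hsplit, ← hcards]
      push_cast
      calc ((nbrs A B₁).card + (nbrs A B₂).card : ℝ) ^ 2
          ≤ ((F₁.size : ℝ) + F₂.size) * ((A.card : ℝ) * B₁.card + (A.card : ℝ) * B₂.card) :=
            cauchy2 _ _ _ _ _ _ (by positivity) (by positivity) (by positivity)
              (by positivity) (by positivity) (by positivity) h₁' h₂'
        _ = ((F₁.size : ℝ) + F₂.size) * (A.card : ℝ) * ((B₁.card : ℝ) + B₂.card) := by ring
    show (nbrs A B).card ^ 2 ≤ (F₁.size + F₂.size) * A.card * B.card
    exact_mod_cast goalR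

lemma card_parity_classes (hn : 1 ≤ n) (t : Bool) :
    (Finset.univ.filter fun y : Fin n → Bool => bparity y = t).card
      = (Finset.univ.filter fun y : Fin n → Bool => bparity y = !t).card := by
  have i0 : Fin n := ⟨0, hn⟩
  apply Finset.card_bij' (fun a _ => flip a i0) (fun a _ => flip a i0)
  · intro a ha
    simp only [Finset.mem_filter, Finset.mem_univ, true_and] at ha ⊢
    rw [bparity_flip, ha]
  · intro a ha
    simp only [Finset.mem_filter, Finset.mem_univ, true_and] at ha ⊢
    rw [bparity_flip, ha, Bool.not_not]
  · intro a _; exact flip_flip a i0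
  · intro a _; exact flip_flip a i0

lemma parity_class_nonempty (hn : 1 ≤ n) (t : Bool) :
    0 < (Finset.univ.filter fun y : Fin n → Bool => bparity y = t).card := by
  rw [Finset.card_pos]
  have i0 : Fin n := ⟨0, hn⟩
  cases t with
  | false => exact ⟨fun _ => false, by simp [bparity_allfalse]⟩
  | true =>
    refine ⟨flip (fun _ => false) i0, ?_⟩
    simp [bparity_flip, bparity_allfalse]

lemma nbrs_card (t : Bool) :
    (nbrs (Finset.univ.filter fun y : Fin n → Bool => bparity y = t)
      (Finset.univ.filter fun y : Fin n → Bool => bparity y = !t)).card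
      = (Finset.univ.filter fun y : Fin n → Bool => bparity y = t).card * n := by
  set A := Finset.univ.filter fun y : Fin n → Bool => bparity y = t with hAdef
  set B := Finset.univ.filter fun y : Fin n → Bool => bparity y = !t with hBdef
  have : (A ×ˢ (Finset.univ : Finset (Fin n))).card = (nbrs A B).card := by
    apply Finset.card_bij (fun p _ => (p.1, flip p.1 p.2))
    · rintro ⟨a, i⟩ hp
      simp only [Finset.mem_product, Finset.mem_univ, and_true] at hp
      simp only [nbrs, Finset.mem_filter, Finset.mem_product]
      refine ⟨⟨hp, ?_⟩, i, rfl⟩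
      have := Finset.mem_filter.mp hp
      rw [hBdef]
      simp only [Finset.mem_filter, Finset.mem_univ, true_and]
      rw [bparity_flip, this.2]
    · rintro ⟨a, i⟩ hp ⟨a', i'⟩ hq h
      simp only [Prod.mk.injEq] at h
      obtain ⟨h1, h2⟩ := h
      subst h1
      refine Prod.ext rfl ?_
      by_contra hii
      simp only at hii
      have hv : flip a i i = flip a i' i := by rw [h2]
      rw [flip_self, flip_ne _ hii] at hv
      simp at hv
    · rintro ⟨a, b⟩ hp
      simp only [nbrs, Finset.mem_filter, Finset.mem_product] at hp
      obtain ⟨⟨haA, _⟩, i, hi⟩ := hp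
      exact ⟨(a, i), Finset.mem_product.mpr ⟨haA, Finset.mem_univ i⟩, by simp [hi]⟩
  rw [← this, Finset.card_product, Finset.card_univ, Fintype.card_fin]

/-- The core quantitative statement: hypotheses force `size F ≥ n²`. -/
lemma size_ge_sq (hn : 1 ≤ n) (F : BFormula n) (t : Bool)
    (hA : ∀ y, bparity y = t → F.eval y = false)
    (hB : ∀ y, bparity y = !t → F.eval y = true) :
    n ^ 2 ≤ F.size := by
  set A := Finset.univ.filter fun y : Fin n → Bool => bparity y = t with hAdef
  set B := Finset.univ.filter fun y : Fin n → Bool => bparity y = !t with hBdef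
  have hk := khrapchenko F A B
    (fun a ha => hA a (Finset.mem_filter.mp ha).2)
    (fun b hb => hB b (Finset.mem_filter.mp hb).2)
  rw [nbrs_card t] at hk
  have hBA : B.card = A.card := (card_parity_classes hn t).symm
  rw [hBA] at hk
  have hApos : 0 < A.card := parity_class_nonempty hn t
  have h2 : n ^ 2 * (A.card * A.card) ≤ F.size * (A.card * A.card) := by
    calc n ^ 2 * (A.card * A.card) = (A.card * n) ^ 2 := by ring
      _ ≤ F.size * A.card * A.card := hk
      _ = F.size * (A.card * A.card) := by ring
  exact Nat.le_of_mul_le_mul_right h2 (Nat.mul_pos hApos hApos)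

end Subb

/-- **Subbotovskaya's formula lower bound for parity.** For every `n ≥ 1`, every Boolean
formula `F` on `n` variables with `size F < n^{3/2}`, and every `b ∈ {0,1}`, there is an
input `y ∈ {0,1}ⁿ` with `F(y) ≠ ⊕(y) + b (mod 2)`. In particular, every formula computing
parity (`b = 0`), and every formula computing its complement (`b = 1`), has size at least
`n^{3/2}`. -/
theorem subbotovskaya_parity_lower_bound {n : ℕ} (hn : 1 ≤ n) :
    (∀ F : BFormula n, (F.size : ℝ) < (n : ℝ) ^ ((3 : ℝ) / 2) → ∀ b : Bool,
      ∃ y : Fin n → Bool, F.eval y ≠ xor (bparity y) b) ∧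
    (∀ F : BFormula n,
      ((∀ y, F.eval y = bparity y) ∨ (∀ y, F.eval y = !(bparity y))) →
        (n : ℝ) ^ ((3 : ℝ) / 2) ≤ (F.size : ℝ)) := by
  have key : ∀ F : BFormula n,
      ((∀ y, F.eval y = bparity y) ∨ (∀ y, F.eval y = !(bparity y))) →
        (n : ℝ) ^ ((3 : ℝ) / 2) ≤ (F.size : ℝ) := by
    intro F h
    have hsq : n ^ 2 ≤ F.size := by
      rcases h with h | h
      · exact Subb.size_ge_sq hn F false
          (fun y hy => by rw [h y, hy])
          (fun y hy => by rw [h y, hy]; rfl)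
      · exact Subb.size_ge_sq hn F true
          (fun y hy => by rw [h y, hy]; rfl)
          (fun y hy => by rw [h y, hy]; rfl)
    have h1 : (1 : ℝ) ≤ (n : ℝ) := by exact_mod_cast hn
    calc (n : ℝ) ^ ((3 : ℝ) / 2) ≤ (n : ℝ) ^ ((2 : ℕ) : ℝ) :=
          Real.rpow_le_rpow_of_exponent_le h1 (by norm_num)
      _ = (n : ℝ) ^ (2 : ℕ) := Real.rpow_natCast _ 2
      _ ≤ (F.size : ℝ) := by exact_mod_cast hsq
  refine ⟨?_, key⟩
  intro F hsize b
  by_contra hcon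
  push_neg at hcon
  have : (∀ y, F.eval y = bparity y) ∨ (∀ y, F.eval y = !(bparity y)) := by
    cases b with
    | false => left; intro y; simpa using hcon y
    | true => right; intro y; simpa [Bool.xor_true] using hcon y
  exact absurd hsize (not_lt.mpr (key F this))
end

section
/- One-step shrinkage under restriction: For every n ≥ 1 and every Boolean formula F over the variables x₁, …, xₙ, there exist an index i ∈ {1, …, n}, a bit c ∈ {0,1}, and a Boolean formula F' over the remaining n−1 variables such that size(F') ≤ (1 − 1/n)^{3/2} · size(F) and, for every assignment z to the variables other than xᵢ, F'(z) = F(z together with xᵢ := c). -/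
deriving instance DecidableEq for BFormula

namespace BFormula

variable {n : ℕ}

/-- simplifying conjunction -/
def mkAnd (F G : BFormula n) : BFormula n :=
  if F = const false then const false
  else if G = const false then const false
  else if F = const true then G
  else if G = const true then F
  else and F G

def mkOr (F G : BFormula n) : BFormula n :=
  if F = const true then const true
  else if G = const true then const true
  else if F = const false then G
  else if G = const false then F
  else or F G

lemma eval_mkAnd (y : Fin n → Bool) (F G : BFormula n) :
    eval y (mkAnd F G) = (eval y F && eval y G) := by
  unfold mkAnd; split_ifs <;> subst_vars <;> simp [eval]

lemma eval_mkOr (y : Fin n → Bool) (F G : BFormula n) :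
    eval y (mkOr F G) = (eval y F || eval y G) := by
  unfold mkOr; split_ifs <;> subst_vars <;> simp [eval]

lemma size_mkAnd (F G : BFormula n) : size (mkAnd F G) ≤ size F + size G := by
  unfold mkAnd; split_ifs <;> simp [size]

lemma size_mkOr (F G : BFormula n) : size (mkOr F G) ≤ size F + size G := by
  unfold mkOr; split_ifs <;> simp [size]

lemma mkAnd_false_left (G : BFormula n) : mkAnd (const false) G = const false := by
  simp [mkAnd]

lemma mkAnd_false_right (F : BFormula n) : mkAnd F (const false) = const false := by
  unfold mkAnd; split_ifs <;> simp_all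

lemma mkOr_true_left (G : BFormula n) : mkOr (const true) G = const true := by
  simp [mkOr]

lemma mkOr_true_right (F : BFormula n) : mkOr F (const true) = const true := by
  unfold mkOr; split_ifs <;> simp_all

/-- number of leaves labelled by variable `i` -/
def cnt (i : Fin n) : BFormula n → ℕ
  | const _ => 0
  | lit j _ => if j = i then 1 else 0
  | and F G => cnt i F + cnt i G
  | or F G => cnt i F + cnt i G

lemma cnt_mkAnd (i : Fin n) (F G : BFormula n) : cnt i (mkAnd F G) ≤ cnt i F + cnt i G := by
  unfold mkAnd; split_ifs <;> simp [cnt]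

lemma cnt_mkOr (i : Fin n) (F G : BFormula n) : cnt i (mkOr F G) ≤ cnt i F + cnt i G := by
  unfold mkOr; split_ifs <;> simp [cnt]

lemma sum_cnt (F : BFormula n) : ∑ i, cnt i F = size F := by
  induction F with
  | const b => simp [cnt, size]
  | lit j b => simp [cnt, size]
  | and F G ihF ihG => simp [cnt, size, Finset.sum_add_distrib, ihF, ihG]
  | or F G ihF ihG => simp [cnt, size, Finset.sum_add_distrib, ihF, ihG]

/-- substitute the constant that makes `lit i b` true, with simplification -/
def ssubst (i : Fin n) (c : Bool) : BFormula n → BFormula n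
  | const b => const b
  | lit j b => if j = i then const (if b then c else !c) else lit j b
  | and F G => mkAnd (ssubst i c F) (ssubst i c G)
  | or F G => mkOr (ssubst i c F) (ssubst i c G)

lemma eval_ssubst {i : Fin n} {c : Bool} (y : Fin n → Bool) (h : y i = c) (F : BFormula n) :
    eval y (ssubst i c F) = eval y F := by
  induction F with
  | const b => rfl
  | lit j b =>
      unfold ssubst
      by_cases hj : j = i
      · subst hj; rw [if_pos rfl]; cases b <;> simp [eval, h]
      · rw [if_neg hj]
  | and F G ihF ihG => simp [ssubst, eval_mkAnd, ihF, ihG, eval]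
  | or F G ihF ihG => simp [ssubst, eval_mkOr, ihF, ihG, eval]

lemma size_ssubst_le (i : Fin n) (c : Bool) (F : BFormula n) :
    size (ssubst i c F) ≤ size F := by
  induction F with
  | const b => simp [ssubst, size]
  | lit j b => unfold ssubst; split_ifs <;> simp [size]
  | and F G ihF ihG =>
      have := size_mkAnd (ssubst i c F) (ssubst i c G)
      simp only [ssubst, size]; omega
  | or F G ihF ihG =>
      have := size_mkOr (ssubst i c F) (ssubst i c G)
      simp only [ssubst, size]; omega

lemma size_ssubst_lt {i : Fin n} {c : Bool} {F : BFormula n} (h : 1 ≤ cnt i F) :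
    size (ssubst i c F) + 1 ≤ size F := by
  induction F with
  | const b => simp [cnt] at h
  | lit j b =>
      simp only [cnt] at h
      have hj : j = i := by by_contra hc; simp [hc] at h
      subst hj; simp [ssubst, size]
  | and F G ihF ihG =>
      have hm := size_mkAnd (ssubst i c F) (ssubst i c G)
      have h1 := size_ssubst_le i c F
      have h2 := size_ssubst_le i c G
      simp only [cnt] at h
      simp only [ssubst, size]
      rcases le_or_gt 1 (cnt i F) with hF | hF
      · have := ihF hF; omega
      · have : 1 ≤ cnt i G := by omega
        have := ihG this; omega
  | or F G ihF ihG =>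
      have hm := size_mkOr (ssubst i c F) (ssubst i c G)
      have h1 := size_ssubst_le i c F
      have h2 := size_ssubst_le i c G
      simp only [cnt] at h
      simp only [ssubst, size]
      rcases le_or_gt 1 (cnt i F) with hF | hF
      · have := ihF hF; omega
      · have : 1 ≤ cnt i G := by omega
        have := ihG this; omega

end BFormula

namespace BFormula

variable {n : ℕ}

/-- no constant occurs as a child of a gate -/
def NoConst : BFormula n → Prop
  | const _ => True
  | lit _ _ => True
  | and F G => (∀ b, F ≠ const b) ∧ (∀ b, G ≠ const b) ∧ NoConst F ∧ NoConst G
  | or F G => (∀ b, F ≠ const b) ∧ (∀ b, G ≠ const b) ∧ NoConst F ∧ NoConst G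

/-- normalized formulas: no constant children, and a literal child's sibling does not
contain the literal's variable -/
def Normalized : BFormula n → Prop
  | const _ => True
  | lit _ _ => True
  | and F G => Normalized F ∧ Normalized G ∧ (∀ b, F ≠ const b) ∧ (∀ b, G ≠ const b) ∧
      (∀ i b, F = lit i b → cnt i G = 0) ∧ (∀ i b, G = lit i b → cnt i F = 0)
  | or F G => Normalized F ∧ Normalized G ∧ (∀ b, F ≠ const b) ∧ (∀ b, G ≠ const b) ∧
      (∀ i b, F = lit i b → cnt i G = 0) ∧ (∀ i b, G = lit i b → cnt i F = 0)

lemma normalized_noConst : ∀ {F : BFormula n}, Normalized F → NoConst F := by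
  intro F
  induction F with
  | const b => intro _; trivial
  | lit i b => intro _; trivial
  | and F G ihF ihG =>
      intro h
      obtain ⟨hF, hG, hFc, hGc, _, _⟩ := h
      exact ⟨hFc, hGc, ihF hF, ihG hG⟩
  | or F G ihF ihG =>
      intro h
      obtain ⟨hF, hG, hFc, hGc, _, _⟩ := h
      exact ⟨hFc, hGc, ihF hF, ihG hG⟩

lemma one_le_size : ∀ {F : BFormula n}, NoConst F → (∀ b, F ≠ const b) → 1 ≤ size F := by
  intro F
  induction F with
  | const b => intro _ h2; exact absurd rfl (h2 b)
  | lit i b => intro _ _; simp [size]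
  | and F G ihF ihG =>
      intro h _
      obtain ⟨hFc, _, hF, _⟩ := h
      have := ihF hF hFc
      simp only [size]; omega
  | or F G ihF ihG =>
      intro h _
      obtain ⟨hFc, _, hF, _⟩ := h
      have := ihF hF hFc
      simp only [size]; omega

def noConst_mkAnd {F G : BFormula n} (hF : NoConst F) (hG : NoConst G) :
    NoConst (mkAnd F G) := by
  unfold mkAnd; split_ifs with h1 h2 h3 h4
  · trivial
  · trivial
  · exact hG
  · exact hF
  · exact ⟨fun b => by cases b <;> assumption, fun b => by cases b <;> assumption, hF, hG⟩

def noConst_mkOr {F G : BFormula n} (hF : NoConst F) (hG : NoConst G) :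
    NoConst (mkOr F G) := by
  unfold mkOr; split_ifs with h1 h2 h3 h4
  · trivial
  · trivial
  · exact hG
  · exact hF
  · exact ⟨fun b => by cases b <;> assumption, fun b => by cases b <;> assumption, hF, hG⟩

/-- eliminate constants -/
def reduce : BFormula n → BFormula n
  | const b => const b
  | lit j b => lit j b
  | and F G => mkAnd (reduce F) (reduce G)
  | or F G => mkOr (reduce F) (reduce G)

lemma eval_reduce (y : Fin n → Bool) (F : BFormula n) : eval y (reduce F) = eval y F := by
  induction F with
  | const b => rfl
  | lit j b => rfl
  | and F G ihF ihG => simp [reduce, eval_mkAnd, ihF, ihG, eval]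
  | or F G ihF ihG => simp [reduce, eval_mkOr, ihF, ihG, eval]

lemma size_reduce (F : BFormula n) : size (reduce F) ≤ size F := by
  induction F with
  | const b => simp [reduce]
  | lit j b => simp [reduce]
  | and F G ihF ihG =>
      have := size_mkAnd (reduce F) (reduce G)
      simp only [reduce, size]; omega
  | or F G ihF ihG =>
      have := size_mkOr (reduce F) (reduce G)
      simp only [reduce, size]; omega

lemma noConst_reduce (F : BFormula n) : NoConst (reduce F) := by
  induction F with
  | const b => trivial
  | lit j b => trivial
  | and F G ihF ihG => exact noConst_mkAnd ihF ihG
  | or F G ihF ihG => exact noConst_mkOr ihF ihG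

/-- restriction `x_i := c`, with constant propagation -/
noncomputable def restrict (i : Fin (n + 1)) (c : Bool) : BFormula (n + 1) → BFormula n
  | const b => const b
  | lit j b =>
      if h : j = i then const (if b then c else !c)
      else lit (Fin.exists_succAbove_eq h).choose b
  | and F G => mkAnd (restrict i c F) (restrict i c G)
  | or F G => mkOr (restrict i c F) (restrict i c G)

lemma eval_restrict (i : Fin (n + 1)) (c : Bool) (z : Fin n → Bool) (F : BFormula (n + 1)) :
    eval z (restrict i c F) = eval (i.insertNth c z) F := by
  induction F with
  | const b => rfl
  | lit j b =>
      unfold restrict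
      by_cases h : j = i
      · subst h; rw [dif_pos rfl]; cases b <;> simp [eval, Fin.insertNth_apply_same]
      · rw [dif_neg h]
        have hk := (Fin.exists_succAbove_eq h).choose_spec
        conv_rhs => rw [← hk]
        cases b <;> simp [eval, Fin.insertNth_apply_succAbove]
  | and F G ihF ihG => simp [restrict, eval_mkAnd, ihF, ihG, eval]
  | or F G ihF ihG => simp [restrict, eval_mkOr, ihF, ihG, eval]

lemma restrict_lit_same (i : Fin (n + 1)) (c b : Bool) :
    restrict i c (lit i b) = const (if b then c else !c) := by
  simp [restrict]

lemma size_restrict_add_cnt (i : Fin (n + 1)) (c : Bool) (F : BFormula (n + 1)) :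
    size (restrict i c F) + cnt i F ≤ size F := by
  induction F with
  | const b => simp [restrict, size, cnt]
  | lit j b =>
      unfold restrict
      by_cases h : j = i
      · subst h; rw [dif_pos rfl]; simp [size, cnt]
      · rw [dif_neg h]; simp [size, cnt, h]
  | and F G ihF ihG =>
      have := size_mkAnd (restrict i c F) (restrict i c G)
      simp only [restrict, size, cnt]; omega
  | or F G ihF ihG =>
      have := size_mkOr (restrict i c F) (restrict i c G)
      simp only [restrict, size, cnt]; omega

end BFormula

namespace BFormula

variable {n : ℕ}

def bonus (i : Fin n) : BFormula n → ℕ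
  | const _ => 0
  | lit j _ => if j = i then 1 else 0
  | and _ _ => 0
  | or _ _ => 0

/-- Key counting lemma: for a normalized formula, the two restrictions of variable `i`
together erase at least `3 · cnt i N` leaves (up to a boundary term for bare literals). -/
lemma count_main (i : Fin (n + 1)) :
    ∀ N : BFormula (n + 1), Normalized N →
      size (restrict i true N) + size (restrict i false N) + 3 * cnt i N
        ≤ 2 * size N + bonus i N := by
  intro N
  induction N with
  | const b => intro _; simp [restrict, size, cnt, bonus]
  | lit j b =>
      intro _
      by_cases h : j = i
      · subst h
        rw [restrict_lit_same, restrict_lit_same]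
        cases b <;> simp [size, cnt, bonus]
      · unfold restrict
        rw [dif_neg h, dif_neg h]
        simp [size, cnt, bonus, h]
  | and F G ihF ihG =>
      intro h
      obtain ⟨hF, hG, hFc, hGc, hFl, hGl⟩ := h
      have IF := ihF hF
      have IG := ihG hG
      have hmT := size_mkAnd (restrict i true F) (restrict i true G)
      have hmF := size_mkAnd (restrict i false F) (restrict i false G)
      have hrGt := size_restrict_add_cnt i true G
      have hrGf := size_restrict_add_cnt i false G
      have hrFt := size_restrict_add_cnt i true F
      have hrFf := size_restrict_add_cnt i false F
      simp only [restrict, size, cnt, bonus]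
      by_cases hfl : ∃ b, F = lit i b
      · obtain ⟨b, rfl⟩ := hfl
        have hcG : cnt i G = 0 := hFl i b rfl
        have hG1 : 1 ≤ size G := one_le_size (normalized_noConst hG) hGc
        cases b
        · -- lit i false : x_i := true kills (const false), x_i := false keeps (const true)
          have e1 : restrict i true (lit i false) = const false := by
            rw [restrict_lit_same]; rfl
          have e2 : restrict i false (lit i false) = const true := by
            rw [restrict_lit_same]; rfl
          rw [e1, e2, mkAnd_false_left]
          have h2 : size (mkAnd (const true) (restrict i false G)) ≤ size (restrict i false G) := by
            have := size_mkAnd (const true) (restrict i false G)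
            simpa [size] using this
          simp [size, cnt]
          omega
        · have e1 : restrict i true (lit i true) = const true := by
            rw [restrict_lit_same]; rfl
          have e2 : restrict i false (lit i true) = const false := by
            rw [restrict_lit_same]; rfl
          rw [e1, e2, mkAnd_false_left]
          have h2 : size (mkAnd (const true) (restrict i true G)) ≤ size (restrict i true G) := by
            have := size_mkAnd (const true) (restrict i true G)
            simpa [size] using this
          simp [size, cnt]
          omega
      · by_cases hgl : ∃ b, G = lit i b
        · obtain ⟨b, rfl⟩ := hgl
          have hcF : cnt i F = 0 := hGl i b rfl
          have hF1 : 1 ≤ size F := one_le_size (normalized_noConst hF) hFc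
          cases b
          · have e1 : restrict i true (lit i false) = const false := by
              rw [restrict_lit_same]; rfl
            have e2 : restrict i false (lit i false) = const true := by
              rw [restrict_lit_same]; rfl
            rw [e1, e2, mkAnd_false_right]
            have h2 : size (mkAnd (restrict i false F) (const true)) ≤ size (restrict i false F) := by
              have := size_mkAnd (restrict i false F) (const true)
              simpa [size] using this
            simp [size, cnt]
            omega
          · have e1 : restrict i true (lit i true) = const true := by
              rw [restrict_lit_same]; rfl
            have e2 : restrict i false (lit i true) = const false := by
              rw [restrict_lit_same]; rfl
            rw [e1, e2, mkAnd_false_right]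
            have h2 : size (mkAnd (restrict i true F) (const true)) ≤ size (restrict i true F) := by
              have := size_mkAnd (restrict i true F) (const true)
              simpa [size] using this
            simp [size, cnt]
            omega
        · have bF : bonus i F = 0 := by
            cases F with
            | lit j b =>
                have hj : j ≠ i := by
                  intro hji; subst hji; exact hfl ⟨b, rfl⟩
                simp [bonus, hj]
            | const b => rfl
            | and _ _ => rfl
            | or _ _ => rfl
          have bG : bonus i G = 0 := by
            cases G with
            | lit j b =>
                have hj : j ≠ i := by
                  intro hji; subst hji; exact hgl ⟨b, rfl⟩
                simp [bonus, hj]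
            | const b => rfl
            | and _ _ => rfl
            | or _ _ => rfl
          omega
  | or F G ihF ihG =>
      intro h
      obtain ⟨hF, hG, hFc, hGc, hFl, hGl⟩ := h
      have IF := ihF hF
      have IG := ihG hG
      have hmT := size_mkOr (restrict i true F) (restrict i true G)
      have hmF := size_mkOr (restrict i false F) (restrict i false G)
      have hrGt := size_restrict_add_cnt i true G
      have hrGf := size_restrict_add_cnt i false G
      have hrFt := size_restrict_add_cnt i true F
      have hrFf := size_restrict_add_cnt i false F
      simp only [restrict, size, cnt, bonus]
      by_cases hfl : ∃ b, F = lit i b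
      · obtain ⟨b, rfl⟩ := hfl
        have hcG : cnt i G = 0 := hFl i b rfl
        have hG1 : 1 ≤ size G := one_le_size (normalized_noConst hG) hGc
        cases b
        · have e1 : restrict i true (lit i false) = const false := by
            rw [restrict_lit_same]; rfl
          have e2 : restrict i false (lit i false) = const true := by
            rw [restrict_lit_same]; rfl
          rw [e1, e2, mkOr_true_left]
          have h2 : size (mkOr (const false) (restrict i true G)) ≤ size (restrict i true G) := by
            have := size_mkOr (const false) (restrict i true G)
            simpa [size] using this
          simp [size, cnt]
          omega
        · have e1 : restrict i true (lit i true) = const true := by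
            rw [restrict_lit_same]; rfl
          have e2 : restrict i false (lit i true) = const false := by
            rw [restrict_lit_same]; rfl
          rw [e1, e2, mkOr_true_left]
          have h2 : size (mkOr (const false) (restrict i false G)) ≤ size (restrict i false G) := by
            have := size_mkOr (const false) (restrict i false G)
            simpa [size] using this
          simp [size, cnt]
          omega
      · by_cases hgl : ∃ b, G = lit i b
        · obtain ⟨b, rfl⟩ := hgl
          have hcF : cnt i F = 0 := hGl i b rfl
          have hF1 : 1 ≤ size F := one_le_size (normalized_noConst hF) hFc
          cases b
          · have e1 : restrict i true (lit i false) = const false := by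
              rw [restrict_lit_same]; rfl
            have e2 : restrict i false (lit i false) = const true := by
              rw [restrict_lit_same]; rfl
            rw [e1, e2, mkOr_true_right]
            have h2 : size (mkOr (restrict i true F) (const false)) ≤ size (restrict i true F) := by
              have := size_mkOr (restrict i true F) (const false)
              simpa [size] using this
            simp [size, cnt]
            omega
          · have e1 : restrict i true (lit i true) = const true := by
              rw [restrict_lit_same]; rfl
            have e2 : restrict i false (lit i true) = const false := by
              rw [restrict_lit_same]; rfl
            rw [e1, e2, mkOr_true_right]
            have h2 : size (mkOr (restrict i false F) (const false)) ≤ size (restrict i false F) := by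
              have := size_mkOr (restrict i false F) (const false)
              simpa [size] using this
            simp [size, cnt]
            omega
        · have bF : bonus i F = 0 := by
            cases F with
            | lit j b =>
                have hj : j ≠ i := by
                  intro hji; subst hji; exact hfl ⟨b, rfl⟩
                simp [bonus, hj]
            | const b => rfl
            | and _ _ => rfl
            | or _ _ => rfl
          have bG : bonus i G = 0 := by
            cases G with
            | lit j b =>
                have hj : j ≠ i := by
                  intro hji; subst hji; exact hgl ⟨b, rfl⟩
                simp [bonus, hj]
            | const b => rfl
            | and _ _ => rfl
            | or _ _ => rfl
          omega

end BFormula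

namespace BFormula

variable {n : ℕ}

/-- Combine two normalized formulas with `and`, renormalizing. -/
lemma combineAnd (s : ℕ) :
    ∀ A B : BFormula n, size A + size B ≤ s → Normalized A → Normalized B →
    (∀ G : BFormula n, NoConst G → size G < size A + size B →
        ∃ N, Normalized N ∧ size N ≤ size G ∧ ∀ y, eval y N = eval y G) →
    ∃ H, Normalized H ∧ size H ≤ size A + size B ∧
      ∀ y, eval y H = (eval y A && eval y B) := by
  induction s using Nat.strong_induction_on with
  | _ s ih =>
  intro A B hs hA hB oracle
  by_cases hAc : ∃ b, A = const b
  · obtain ⟨b, rfl⟩ := hAc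
    cases b
    · exact ⟨const false, trivial, by simp [size], fun y => by simp [eval]⟩
    · exact ⟨B, hB, by simp [size], fun y => by simp [eval]⟩
  · by_cases hBc : ∃ b, B = const b
    · obtain ⟨b, rfl⟩ := hBc
      cases b
      · exact ⟨const false, trivial, by simp [size], fun y => by simp [eval]⟩
      · exact ⟨A, hA, by simp [size], fun y => by simp [eval]⟩
    · push_neg at hAc hBc
      by_cases hAl : ∃ i b, A = lit i b
      · obtain ⟨i, b, rfl⟩ := hAl
        by_cases hc : cnt i B = 0
        · refine ⟨and (lit i b) B, ?_, le_rfl, fun y => rfl⟩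
          refine ⟨trivial, hB, (by intro b' h; cases h), hBc, ?_, ?_⟩
          · intro j b' h
            injection h with h1 h2
            subst h1; exact hc
          · intro j b' hBe
            subst hBe
            simp only [cnt] at hc ⊢
            by_cases hij : i = j
            · subst hij; simp at hc
            · simp [hij]
        · have hc1 : 1 ≤ cnt i B := Nat.one_le_iff_ne_zero.mpr hc
          have hss := size_ssubst_lt (c := b) hc1
          have hrs := size_reduce (ssubst i b B)
          have hG0n : NoConst (reduce (ssubst i b B)) := noConst_reduce _
          have hszA : size (lit i b) = 1 := rfl
          obtain ⟨B', hB', hB's, hB'e⟩ := oracle (reduce (ssubst i b B)) hG0n (by omega)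
          obtain ⟨H, hH, hHs, hHe⟩ :=
            ih (size (lit i b) + size B') (by omega) (lit i b) B' le_rfl hA hB'
              (fun G hGn hGs => oracle G hGn (by omega))
          refine ⟨H, hH, by omega, fun y => ?_⟩
          rw [hHe y]
          cases hv : eval y (lit i b) with
          | false => simp
          | true =>
            have hyi : y i = b := by
              cases b <;> simp [eval] at hv <;> simp [hv]
            have : eval y B' = eval y B := by
              rw [hB'e y, eval_reduce, eval_ssubst y hyi]
            rw [this]
      · by_cases hBl : ∃ i b, B = lit i b
        · obtain ⟨i, b, rfl⟩ := hBl
          push_neg at hAl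
          by_cases hc : cnt i A = 0
          · refine ⟨and A (lit i b), ?_, le_rfl, fun y => rfl⟩
            refine ⟨hA, trivial, hAc, (by intro b' h; cases h), ?_, ?_⟩
            · intro j b' h
              exact absurd h (hAl j b')
            · intro j b' h
              injection h with h1 h2
              subst h1; exact hc
          · have hc1 : 1 ≤ cnt i A := Nat.one_le_iff_ne_zero.mpr hc
            have hss := size_ssubst_lt (c := b) hc1
            have hrs := size_reduce (ssubst i b A)
            have hG0n : NoConst (reduce (ssubst i b A)) := noConst_reduce _
            have hszB : size (lit i b) = 1 := rfl
            obtain ⟨A', hA', hA's, hA'e⟩ := oracle (reduce (ssubst i b A)) hG0n (by omega)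
            obtain ⟨H, hH, hHs, hHe⟩ :=
              ih (size A' + size (lit i b)) (by omega) A' (lit i b) le_rfl hA' hB
                (fun G hGn hGs => oracle G hGn (by omega))
            refine ⟨H, hH, by omega, fun y => ?_⟩
            rw [hHe y]
            cases hv : eval y (lit i b) with
            | false => simp
            | true =>
              have hyi : y i = b := by
                cases b <;> simp [eval] at hv <;> simp [hv]
              have : eval y A' = eval y A := by
                rw [hA'e y, eval_reduce, eval_ssubst y hyi]
              rw [this]
        · push_neg at hAl hBl
          refine ⟨and A B, ?_, le_rfl, fun y => rfl⟩
          exact ⟨hA, hB, hAc, hBc, fun j b h => absurd h (hAl j b),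
            fun j b h => absurd h (hBl j b)⟩

/-- Combine two normalized formulas with `or`, renormalizing. -/
lemma combineOr (s : ℕ) :
    ∀ A B : BFormula n, size A + size B ≤ s → Normalized A → Normalized B →
    (∀ G : BFormula n, NoConst G → size G < size A + size B →
        ∃ N, Normalized N ∧ size N ≤ size G ∧ ∀ y, eval y N = eval y G) →
    ∃ H, Normalized H ∧ size H ≤ size A + size B ∧
      ∀ y, eval y H = (eval y A || eval y B) := by
  induction s using Nat.strong_induction_on with
  | _ s ih =>
  intro A B hs hA hB oracle
  by_cases hAc : ∃ b, A = const b
  · obtain ⟨b, rfl⟩ := hAc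
    cases b
    · exact ⟨B, hB, by simp [size], fun y => by simp [eval]⟩
    · exact ⟨const true, trivial, by simp [size], fun y => by simp [eval]⟩
  · by_cases hBc : ∃ b, B = const b
    · obtain ⟨b, rfl⟩ := hBc
      cases b
      · exact ⟨A, hA, by simp [size], fun y => by simp [eval]⟩
      · exact ⟨const true, trivial, by simp [size], fun y => by simp [eval]⟩
    · push_neg at hAc hBc
      by_cases hAl : ∃ i b, A = lit i b
      · obtain ⟨i, b, rfl⟩ := hAl
        by_cases hc : cnt i B = 0
        · refine ⟨or (lit i b) B, ?_, le_rfl, fun y => rfl⟩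
          refine ⟨trivial, hB, (by intro b' h; cases h), hBc, ?_, ?_⟩
          · intro j b' h
            injection h with h1 h2
            subst h1; exact hc
          · intro j b' hBe
            subst hBe
            simp only [cnt] at hc ⊢
            by_cases hij : i = j
            · subst hij; simp at hc
            · simp [hij]
        · have hc1 : 1 ≤ cnt i B := Nat.one_le_iff_ne_zero.mpr hc
          have hss := size_ssubst_lt (c := !b) hc1
          have hrs := size_reduce (ssubst i (!b) B)
          have hG0n : NoConst (reduce (ssubst i (!b) B)) := noConst_reduce _
          have hszA : size (lit i b) = 1 := rfl
          obtain ⟨B', hB', hB's, hB'e⟩ := oracle (reduce (ssubst i (!b) B)) hG0n (by omega)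
          obtain ⟨H, hH, hHs, hHe⟩ :=
            ih (size (lit i b) + size B') (by omega) (lit i b) B' le_rfl hA hB'
              (fun G hGn hGs => oracle G hGn (by omega))
          refine ⟨H, hH, by omega, fun y => ?_⟩
          rw [hHe y]
          cases hv : eval y (lit i b) with
          | true => simp
          | false =>
            have hyi : y i = !b := by
              cases b <;> simp [eval] at hv <;> simp [hv]
            have : eval y B' = eval y B := by
              rw [hB'e y, eval_reduce, eval_ssubst y hyi]
            rw [this]
      · by_cases hBl : ∃ i b, B = lit i b
        · obtain ⟨i, b, rfl⟩ := hBl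
          push_neg at hAl
          by_cases hc : cnt i A = 0
          · refine ⟨or A (lit i b), ?_, le_rfl, fun y => rfl⟩
            refine ⟨hA, trivial, hAc, (by intro b' h; cases h), ?_, ?_⟩
            · intro j b' h
              exact absurd h (hAl j b')
            · intro j b' h
              injection h with h1 h2
              subst h1; exact hc
          · have hc1 : 1 ≤ cnt i A := Nat.one_le_iff_ne_zero.mpr hc
            have hss := size_ssubst_lt (c := !b) hc1
            have hrs := size_reduce (ssubst i (!b) A)
            have hG0n : NoConst (reduce (ssubst i (!b) A)) := noConst_reduce _
            have hszB : size (lit i b) = 1 := rfl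
            obtain ⟨A', hA', hA's, hA'e⟩ := oracle (reduce (ssubst i (!b) A)) hG0n (by omega)
            obtain ⟨H, hH, hHs, hHe⟩ :=
              ih (size A' + size (lit i b)) (by omega) A' (lit i b) le_rfl hA' hB
                (fun G hGn hGs => oracle G hGn (by omega))
            refine ⟨H, hH, by omega, fun y => ?_⟩
            rw [hHe y]
            cases hv : eval y (lit i b) with
            | true => simp
            | false =>
              have hyi : y i = !b := by
                cases b <;> simp [eval] at hv <;> simp [hv]
              have : eval y A' = eval y A := by
                rw [hA'e y, eval_reduce, eval_ssubst y hyi]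
              rw [this]
        · push_neg at hAl hBl
          refine ⟨or A B, ?_, le_rfl, fun y => rfl⟩
          exact ⟨hA, hB, hAc, hBc, fun j b h => absurd h (hAl j b),
            fun j b h => absurd h (hBl j b)⟩

lemma norm_exists_aux (k : ℕ) :
    ∀ F : BFormula n, size F ≤ k → NoConst F →
      ∃ N, Normalized N ∧ size N ≤ size F ∧ ∀ y, eval y N = eval y F := by
  induction k using Nat.strong_induction_on with
  | _ k ih =>
  intro F hk hF
  cases F with
  | const b => exact ⟨const b, trivial, le_rfl, fun y => rfl⟩
  | lit i b => exact ⟨lit i b, trivial, le_rfl, fun y => rfl⟩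
  | and A B =>
      obtain ⟨hAc, hBc, hA, hB⟩ := hF
      have hA1 : 1 ≤ size A := one_le_size hA hAc
      have hB1 : 1 ≤ size B := one_le_size hB hBc
      have hsz : size (and A B) = size A + size B := rfl
      rw [hsz] at hk
      obtain ⟨A', hA', hA's, hA'e⟩ := ih (size A) (by omega) A le_rfl hA
      obtain ⟨B', hB', hB's, hB'e⟩ := ih (size B) (by omega) B le_rfl hB
      obtain ⟨H, hH, hHs, hHe⟩ := combineAnd (size A' + size B') A' B' le_rfl hA' hB'
        (fun G hGn hGs => ih (size G) (by omega) G le_rfl hGn)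
      refine ⟨H, hH, by rw [hsz]; omega, fun y => ?_⟩
      rw [hHe y, hA'e y, hB'e y]; rfl
  | or A B =>
      obtain ⟨hAc, hBc, hA, hB⟩ := hF
      have hA1 : 1 ≤ size A := one_le_size hA hAc
      have hB1 : 1 ≤ size B := one_le_size hB hBc
      have hsz : size (or A B) = size A + size B := rfl
      rw [hsz] at hk
      obtain ⟨A', hA', hA's, hA'e⟩ := ih (size A) (by omega) A le_rfl hA
      obtain ⟨B', hB', hB's, hB'e⟩ := ih (size B) (by omega) B le_rfl hB
      obtain ⟨H, hH, hHs, hHe⟩ := combineOr (size A' + size B') A' B' le_rfl hA' hB'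
        (fun G hGn hGs => ih (size G) (by omega) G le_rfl hGn)
      refine ⟨H, hH, by rw [hsz]; omega, fun y => ?_⟩
      rw [hHe y, hA'e y, hB'e y]; rfl

lemma norm_exists (F : BFormula n) :
    ∃ N, Normalized N ∧ size N ≤ size F ∧ ∀ y, eval y N = eval y F := by
  obtain ⟨N, h1, h2, h3⟩ := norm_exists_aux (size (reduce F)) (reduce F) le_rfl (noConst_reduce F)
  exact ⟨N, h1, le_trans h2 (size_reduce F), fun y => by rw [h3 y, eval_reduce]⟩

end BFormula

namespace BFormula

variable {n : ℕ}

lemma gate_case (N : BFormula (n + 1)) (hN : Normalized N) (hb : ∀ i, bonus i N = 0) :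
    ∃ (i : Fin (n + 1)) (c : Bool),
      2 * (n + 1) * size (restrict i c N) + 3 * size N ≤ 2 * (n + 1) * size N := by
  have h1 : ∀ i, size (restrict i true N) + size (restrict i false N) + 3 * cnt i N
      ≤ 2 * size N := fun i => by
    have := count_main i N hN
    rw [hb i] at this
    omega
  set T := ∑ p : Fin (n + 1) × Bool, size (restrict p.1 p.2 N) with hTdef
  have h2 : T = ∑ i : Fin (n + 1), (size (restrict i true N) + size (restrict i false N)) := by
    rw [hTdef, Fintype.sum_prod_type]
    congr 1
  have h4 : ∑ i : Fin (n + 1),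
      (size (restrict i true N) + size (restrict i false N) + 3 * cnt i N)
      = (∑ i : Fin (n + 1), (size (restrict i true N) + size (restrict i false N)))
        + 3 * size N := by
    rw [Finset.sum_add_distrib, ← Finset.mul_sum, sum_cnt]
  have h3 := Finset.sum_le_sum (fun i (_ : i ∈ Finset.univ) => h1 i)
  rw [h4] at h3
  have h5 : ∑ _i : Fin (n + 1), 2 * size N = (n + 1) * (2 * size N) := by
    simp [Finset.sum_const, Finset.card_univ, mul_comm]
  rw [h5] at h3
  have hsum : T + 3 * size N ≤ 2 * (n + 1) * size N := by
    rw [h2]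
    calc (∑ i : Fin (n + 1), (size (restrict i true N) + size (restrict i false N)))
          + 3 * size N ≤ (n + 1) * (2 * size N) := h3
      _ = 2 * (n + 1) * size N := by ring
  by_contra hcon
  push_neg at hcon
  have hall : ∀ p : Fin (n + 1) × Bool,
      2 * (n + 1) * size N + 1 ≤ 2 * (n + 1) * size (restrict p.1 p.2 N) + 3 * size N :=
    fun p => hcon p.1 p.2
  have hcard : (Finset.univ : Finset (Fin (n + 1) × Bool)).card = 2 * (n + 1) := by
    simp [Finset.card_univ]
    ring
  have hsum2 : (Finset.univ : Finset (Fin (n + 1) × Bool)).card * (2 * (n + 1) * size N + 1)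
      ≤ ∑ p : Fin (n + 1) × Bool, (2 * (n + 1) * size (restrict p.1 p.2 N) + 3 * size N) := by
    have := Finset.card_nsmul_le_sum (Finset.univ : Finset (Fin (n + 1) × Bool))
      (fun p => 2 * (n + 1) * size (restrict p.1 p.2 N) + 3 * size N)
      (2 * (n + 1) * size N + 1) (fun p _ => hall p)
    simpa [smul_eq_mul] using this
  have hsum3 : ∑ p : Fin (n + 1) × Bool,
      (2 * (n + 1) * size (restrict p.1 p.2 N) + 3 * size N)
      = 2 * (n + 1) * T + 2 * (n + 1) * (3 * size N) := by
    rw [Finset.sum_add_distrib, ← Finset.mul_sum, Finset.sum_const, smul_eq_mul, hcard, ← hTdef]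
  rw [hcard, hsum3] at hsum2
  have h6 : 2 * (n + 1) * T + 2 * (n + 1) * (3 * size N)
      = 2 * (n + 1) * (T + 3 * size N) := by ring
  rw [h6] at hsum2
  have h7 : 2 * (n + 1) * (T + 3 * size N) ≤ 2 * (n + 1) * (2 * (n + 1) * size N) :=
    Nat.mul_le_mul_left _ hsum
  have h8 : 2 * (n + 1) * size N + 1 ≤ 2 * (n + 1) * size N :=
    Nat.le_of_mul_le_mul_left (le_trans hsum2 h7) (by omega)
  omega

end BFormula



open BFormula

/-- **One-step shrinkage under restriction.** For every `n ≥ 1` (here the number of variables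
is `n + 1`) and every Boolean formula `F` over `x₁, …, x_{n+1}`, there are an index `i`, a bit
`c`, and a formula `F'` over the remaining `n` variables with
`size F' ≤ (1 - 1/(n+1))^{3/2} · size F` such that for every assignment `z` to the variables
other than `xᵢ`, `F'(z) = F(z together with xᵢ := c)`. -/
theorem one_step_shrinkage {n : ℕ} (F : BFormula (n + 1)) :
    ∃ (i : Fin (n + 1)) (c : Bool) (F' : BFormula n),
      (F'.size : ℝ) ≤ ((1 : ℝ) - 1 / ((n : ℝ) + 1)) ^ ((3 : ℝ) / 2) * (F.size : ℝ) ∧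
      ∀ z : Fin n → Bool, F'.eval z = F.eval (i.insertNth c z) := by
  obtain ⟨N, hN, hNs, hNe⟩ := norm_exists F
  have h0n : (0:ℝ) ≤ (n:ℝ) := Nat.cast_nonneg n
  have hbase : (0:ℝ) ≤ 1 - 1 / ((n:ℝ) + 1) := by
    rw [sub_nonneg, div_le_one (by linarith)]
    linarith
  have hpow : (0:ℝ) ≤ ((1:ℝ) - 1 / ((n:ℝ) + 1)) ^ ((3:ℝ)/2) := Real.rpow_nonneg hbase _
  by_cases hlit : ∃ j b, N = lit j b
  · obtain ⟨j, b, hNlit⟩ := hlit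
    refine ⟨j, true, restrict j true N, ?_, fun z => by rw [eval_restrict]; exact hNe _⟩
    have h0 : size (restrict j true N) = 0 := by
      subst hNlit
      rw [restrict_lit_same]
      cases b <;> rfl
    rw [h0]
    simpa using mul_nonneg hpow (Nat.cast_nonneg (size F))
  · have hb : ∀ i, bonus i N = 0 := by
      intro i
      cases N with
      | const b => rfl
      | lit j b => exact absurd ⟨j, b, rfl⟩ hlit
      | and _ _ => rfl
      | or _ _ => rfl
    obtain ⟨i, c, hkey⟩ := gate_case N hN hb
    refine ⟨i, c, restrict i c N, ?_, fun z => by rw [eval_restrict]; exact hNe _⟩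
    have hR : 2 * ((n:ℝ) + 1) * (size (restrict i c N) : ℝ) + 3 * (size N : ℝ)
        ≤ 2 * ((n:ℝ) + 1) * (size N : ℝ) := by exact_mod_cast hkey
    have hMpos : (0:ℝ) < 2 * ((n:ℝ) + 1) := by positivity
    have step1 : ((size (restrict i c N)) : ℝ) ≤ (1 - 3 / (2 * ((n:ℝ) + 1))) * (size N : ℝ) := by
      rw [show (1 - 3 / (2 * ((n:ℝ) + 1))) * (size N : ℝ)
          = (2 * ((n:ℝ) + 1) * (size N : ℝ) - 3 * (size N : ℝ)) / (2 * ((n:ℝ) + 1)) from by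
        field_simp]
      rw [le_div_iff₀ hMpos]
      linarith
    have hx : (-1:ℝ) ≤ -(1 / ((n:ℝ) + 1)) := by
      have : (1:ℝ) / ((n:ℝ) + 1) ≤ 1 := by rw [div_le_one (by linarith)]; linarith
      linarith
    have hBern := one_add_mul_self_le_rpow_one_add hx (by norm_num : (1:ℝ) ≤ 3 / 2)
    have hBern' : 1 - 3 / (2 * ((n:ℝ) + 1)) ≤ ((1:ℝ) - 1 / ((n:ℝ) + 1)) ^ ((3:ℝ)/2) := by
      have e1 : (1:ℝ) + -(1 / ((n:ℝ) + 1)) = 1 - 1 / ((n:ℝ) + 1) := by ring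
      have e2 : (1:ℝ) + 3 / 2 * -(1 / ((n:ℝ) + 1)) = 1 - 3 / (2 * ((n:ℝ) + 1)) := by
        field_simp
        ring
      rw [e1, e2] at hBern
      exact hBern
    calc ((size (restrict i c N)) : ℝ)
        ≤ (1 - 3 / (2 * ((n:ℝ) + 1))) * (size N : ℝ) := step1
      _ ≤ ((1:ℝ) - 1 / ((n:ℝ) + 1)) ^ ((3:ℝ)/2) * (size N : ℝ) :=
          mul_le_mul_of_nonneg_right hBern' (Nat.cast_nonneg _)
      _ ≤ ((1:ℝ) - 1 / ((n:ℝ) + 1)) ^ ((3:ℝ)/2) * (size F : ℝ) :=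
          mul_le_mul_of_nonneg_left (by exact_mod_cast hNs) hpow
end
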